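/- Let A be a finite dimensional algebra over an algebraically closed field of global dimension at most n, and let T be a cotilting A-module. Then for every X ∈ ⊥T, the n-th cosyzygy Ω_T^{−n}(X) with respect to T lies in add T. That is, if 0 → X → T_0 → T_1 → ··· → T_{n−1} → C → 0 is an exact sequence obtained by repeatedly taking injective left (add T)-approximations (so each T_i ∈ add T and each image is the cokernel of an injective left (add T)-approximation), then C ∈ add T. -/

import Mathlib

noncomputable section

open CategoryTheory Function

namespace Cotilt

variable (A : Type) [Ring A]

/-- `X ∈ add T`: `X` is a direct summand of a finite direct sum of copies of `T`. -/
def InAdd (T X : ModuleCat.{0} A) : Prop :=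
  ∃ (n : ℕ) (Y : ModuleCat.{0} A), Nonempty ((↥X × ↥Y) ≃ₗ[A] (Fin n → ↥T))

/-- A morphism factors through a module in `add T`. -/
def FactorsThruAdd (T : ModuleCat.{0} A) {X Y : ModuleCat.{0} A}
    (f : ↥X →ₗ[A] ↥Y) : Prop :=
  ∃ (T' : ModuleCat.{0} A), InAdd A T T' ∧
    ∃ (g : ↥X →ₗ[A] ↥T') (h : ↥T' →ₗ[A] ↥Y), f = h.comp g

/-- `Ext¹_A(X, Y) = 0`: every short exact sequence `0 → Y → E → X → 0` splits. -/
def Ext1Zero (X Y : ModuleCat.{0} A) : Prop :=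
  ∀ (E : ModuleCat.{0} A) (f : ↥Y →ₗ[A] ↥E) (g : ↥E →ₗ[A] ↥X),
    Injective f → Surjective g → LinearMap.range f = LinearMap.ker g →
    ∃ s : ↥X →ₗ[A] ↥E, g.comp s = LinearMap.id

/-- `Z` is a (first) syzygy of `X`: there is a short exact sequence `0 → Z → P → X → 0`
with `P` projective. -/
def IsSyzygyOf (Z X : ModuleCat.{0} A) : Prop :=
  ∃ (P : ModuleCat.{0} A) (p : ↥P →ₗ[A] ↥X) (i : ↥Z →ₗ[A] ↥P),
    Module.Projective A ↥P ∧ Surjective p ∧ Injective i ∧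
    LinearMap.range i = LinearMap.ker p

/-- `Z` is an `n`-th syzygy of `X`. -/
def NthSyzygy : ℕ → ModuleCat.{0} A → ModuleCat.{0} A → Prop
  | 0, Z, X => Nonempty (↥Z ≃ₗ[A] ↥X)
  | n+1, Z, X => ∃ W : ModuleCat.{0} A, IsSyzygyOf A W X ∧ NthSyzygy n Z W

/-- `X ∈ ⊥T`, i.e. `Ext^i_A(X, T) = 0` for all `i > 0`.  By dimension shifting,
`Ext^{n+1}_A(X, T) ≅ Ext¹_A(Ω^n X, T)` for every `n`-th syzygy `Ω^n X` of `X`, so this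
is expressed by the vanishing of `Ext¹(Z, T)` for every iterated syzygy `Z` of `X`
(the case `n = 0`, `Z = X`, giving `Ext¹(X, T) = 0` itself). -/
def MemPerp (T X : ModuleCat.{0} A) : Prop :=
  ∀ (n : ℕ) (Z : ModuleCat.{0} A), NthSyzygy A n Z X → Ext1Zero A Z T

/-- Projective dimension at most `n`. -/
def ProjDimLE : ℕ → ModuleCat.{0} A → Prop
  | 0, X => Module.Projective A ↥X
  | n+1, X => ∃ (P : ModuleCat.{0} A) (f : ↥P →ₗ[A] ↥X),
      Module.Projective A ↥P ∧ Surjective f ∧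
      ProjDimLE n (ModuleCat.of A ↥(LinearMap.ker f))

/-- Injective dimension at most `n`. -/
def InjDimLE : ℕ → ModuleCat.{0} A → Prop
  | 0, X => Module.Injective A ↥X
  | n+1, X => ∃ (I : ModuleCat.{0} A) (f : ↥X →ₗ[A] ↥I),
      Module.Injective A ↥I ∧ Injective f ∧
      InjDimLE n (ModuleCat.of A (↥I ⧸ LinearMap.range f))

/-- The ring `A` has global dimension at most `n`. -/
def GlobalDimLE (n : ℕ) : Prop := ∀ X : ModuleCat.{0} A, ProjDimLE A n X

variable (k : Type) [Field k] [Algebra k A]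

/-- The `k`-linear dual `D(A) = Hom_k(A, k)` of `A`, as a left `A`-module via
`(a • φ) x = φ (x a)`. -/
def CoDual : Type := A →ₗ[k] k

instance : AddCommGroup (CoDual A k) := inferInstanceAs (AddCommGroup (A →ₗ[k] k))

instance : Module A (CoDual A k) where
  smul a φ := (φ : A →ₗ[k] k).comp (LinearMap.mulRight k a)
  one_smul φ := by
    show (φ : A →ₗ[k] k).comp (LinearMap.mulRight k (1 : A)) = φ
    ext x; let ψ : A →ₗ[k] k := φ; exact congrArg ψ (mul_one x)
  mul_smul a b φ := by
    show (φ : A →ₗ[k] k).comp (LinearMap.mulRight k (a * b)) =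
      ((φ : A →ₗ[k] k).comp (LinearMap.mulRight k b)).comp (LinearMap.mulRight k a)
    ext x; let ψ : A →ₗ[k] k := φ; exact congrArg ψ (mul_assoc x a b).symm
  smul_zero a := by
    show (0 : A →ₗ[k] k).comp (LinearMap.mulRight k a) = 0
    ext x; simp
  smul_add a φ ψ := by
    show ((φ + ψ : A →ₗ[k] k)).comp (LinearMap.mulRight k a) =
      (φ : A →ₗ[k] k).comp (LinearMap.mulRight k a) +
        (ψ : A →ₗ[k] k).comp (LinearMap.mulRight k a)
    ext x; rfl
  add_smul a b φ := by
    show (φ : A →ₗ[k] k).comp (LinearMap.mulRight k (a + b)) =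
      (φ : A →ₗ[k] k).comp (LinearMap.mulRight k a) +
        (φ : A →ₗ[k] k).comp (LinearMap.mulRight k b)
    ext x; let ψ : A →ₗ[k] k := φ; exact (congrArg ψ (mul_add x a b)).trans (ψ.map_add _ _)
  zero_smul φ := by
    show (φ : A →ₗ[k] k).comp (LinearMap.mulRight k (0 : A)) = 0
    ext x; let ψ : A →ₗ[k] k := φ; exact (congrArg ψ (mul_zero x)).trans ψ.map_zero

/-- `X` admits a resolution `0 → T_r → ⋯ → T_0 → X → 0` by modules in `add T`
of length at most `r`. -/
def AddTCoresLE (T : ModuleCat.{0} A) : ℕ → ModuleCat.{0} A → Prop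
  | 0, X => InAdd A T X
  | r+1, X => ∃ (T0 : ModuleCat.{0} A) (g : ↥T0 →ₗ[A] ↥X),
      InAdd A T T0 ∧ Surjective g ∧
      AddTCoresLE T r (ModuleCat.of A ↥(LinearMap.ker g))

/-- `T` is a cotilting `A`-module: `T` is finitely generated, has finite injective
dimension, satisfies `Ext^i_A(T, T) = 0` for all `i > 0`, and there is an exact
sequence `0 → T_r → ⋯ → T_1 → T_0 → D(A) → 0` with all `T_i ∈ add T`, where
`D = Hom_k(−, k)`. -/
def IsCotilting (T : ModuleCat.{0} A) : Prop :=
  Module.Finite A ↥T ∧ (∃ d : ℕ, InjDimLE A d T) ∧ MemPerp A T T ∧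
    ∃ r : ℕ, AddTCoresLE A T r (ModuleCat.of A (CoDual A k))

end Cotilt

/-! The cosyzygies `X_i` stay in `⊥T`: if `0 → K → G → C → 0` is exact with `K, G ∈ ⊥T` and
`Hom(G, T) → Hom(K, T)` onto, then `C ∈ ⊥T`, by induction on syzygies through the horseshoe lemma.
For `Y ∈ ⊥T` we have `Ext¹(Y, T_i) = 0`, so the sequences `0 → X_i → T_i → X_{i+1} → 0` embed
`Ext¹(Y, X_n)` into `Ext^{n+1}(Y, X_0)`, which vanishes as `gl.dim A ≤ n`; the characterization
of `add T` inside `⊥T` then puts `X_n` in `add T`.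

Vanishing of `Ext¹` is checked through the criterion: for `0 → K → P → C → 0` with `P`
projective, `Ext¹(C, M) = 0` iff every map `K → M` extends to `P`. -/

namespace Cotilt

open LinearMap

section LinearAlgebra

variable {R : Type*} [Ring R] {K G C M E V : Type*}
  [AddCommGroup K] [Module R K] [AddCommGroup G] [Module R G] [AddCommGroup C] [Module R C]
  [AddCommGroup M] [Module R M] [AddCommGroup E] [Module R E] [AddCommGroup V] [Module R V]

theorem _root_.Function.Exact.exists_lift_of_comp_eq_zero {f : K →ₗ[R] G} {g : G →ₗ[R] C}
    (h : Function.Exact f g) (hf : Injective f) {t : M →ₗ[R] G} (ht : g ∘ₗ t = 0) :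
    ∃ u : M →ₗ[R] K, f ∘ₗ u = t := by
  have hmem : ∀ x, t x ∈ range f := fun x => (h _).mp (LinearMap.congr_fun ht x)
  exact ⟨(LinearEquiv.ofInjective f hf).symm ∘ₗ t.codRestrict _ hmem, by ext x; simp⟩

theorem _root_.Function.Exact.exists_desc_of_comp_eq_zero {f : K →ₗ[R] G} {g : G →ₗ[R] C}
    (h : Function.Exact f g) (hg : Surjective g) {t : G →ₗ[R] M} (ht : t ∘ₗ f = 0) :
    ∃ u : C →ₗ[R] M, u ∘ₗ g = t := by
  have hle : ker g ≤ ker t := by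
    rw [h.linearMap_ker_eq, LinearMap.range_le_ker_iff]
    exact ht
  exact ⟨(ker g).liftQ t hle ∘ₗ (g.quotKerEquivOfSurjective hg).symm, by ext x; simp⟩

/-- Correct `θ` by an extension of its restriction `K → M`: the difference kills `K`, so it
descends to `C`. -/
theorem _root_.Function.Exact.exists_lift_of_surjective_precomp {i : K →ₗ[R] G}
    {ρ : G →ₗ[R] C} (hiρ : Function.Exact i ρ) (hρ : Surjective ρ) {j : M →ₗ[R] E}
    {π : E →ₗ[R] V} (hjπ : Function.Exact j π) (hj : Injective j) {μ : C →ₗ[R] V}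
    {θ : G →ₗ[R] E} (hθ : π ∘ₗ θ = μ ∘ₗ ρ) (hext : Surjective fun ψ : G →ₗ[R] M => ψ ∘ₗ i) :
    ∃ σ : C →ₗ[R] E, π ∘ₗ σ = μ := by
  obtain ⟨φ, hφ⟩ := hjπ.exists_lift_of_comp_eq_zero hj (t := θ ∘ₗ i) (by
    rw [← LinearMap.comp_assoc, hθ, LinearMap.comp_assoc, hiρ.linearMap_comp_eq_zero,
      comp_zero])
  obtain ⟨ψ, hψ : ψ ∘ₗ i = φ⟩ := hext φ
  obtain ⟨σ, hσ⟩ := hiρ.exists_desc_of_comp_eq_zero hρ (t := θ - j ∘ₗ ψ) (by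
    rw [sub_comp, LinearMap.comp_assoc, hψ, hφ, sub_self])
  refine ⟨σ, (cancel_right hρ).mp ?_⟩
  rw [LinearMap.comp_assoc, hσ, comp_sub, hθ, ← LinearMap.comp_assoc,
    hjπ.linearMap_comp_eq_zero, zero_comp, sub_zero]

theorem _root_.Function.Exact.surjective_coprod {P Q : Type*} [AddCommGroup P] [Module R P]
    [AddCommGroup Q] [Module R Q] {f : K →ₗ[R] G} {g : G →ₗ[R] C} (h : Function.Exact f g)
    {πK : P →ₗ[R] K} (hπK : Surjective πK) {σ : Q →ₗ[R] G} (hσ : Surjective (g ∘ₗ σ)) :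
    Surjective ((f ∘ₗ πK).coprod σ) := by
  intro y
  obtain ⟨b, hb⟩ := hσ (g y)
  obtain ⟨k, hk⟩ : y - σ b ∈ range f := by
    rw [← h.linearMap_ker_eq, mem_ker, map_sub, ← LinearMap.comp_apply, hb, sub_self]
  obtain ⟨a, rfl⟩ := hπK k
  exact ⟨(a, b), by simp [hk]⟩

structure IsShortExact (f : K →ₗ[R] G) (g : G →ₗ[R] C) : Prop where
  injective : Injective f
  surjective : Surjective g
  range_eq_ker : range f = ker g

namespace IsShortExact

variable {f : K →ₗ[R] G} {g : G →ₗ[R] C}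

theorem exact (h : IsShortExact f g) : Function.Exact f g :=
  LinearMap.exact_iff.mpr h.range_eq_ker.symm

theorem subtype_ker {ρ : G →ₗ[R] C} (hρ : Surjective ρ) : IsShortExact (ker ρ).subtype ρ :=
  ⟨Subtype.val_injective, hρ, Submodule.range_subtype _⟩

theorem prodMap {K' G' C' : Type*} [AddCommGroup K'] [Module R K'] [AddCommGroup G']
    [Module R G'] [AddCommGroup C'] [Module R C'] {f' : K' →ₗ[R] G'} {g' : G' →ₗ[R] C'}
    (h : IsShortExact f g) (h' : IsShortExact f' g') :
    IsShortExact (f.prodMap f') (g.prodMap g') where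
  injective := h.injective.prodMap h'.injective
  surjective := h.surjective.prodMap h'.surjective
  range_eq_ker := by rw [range_prodMap, ker_prodMap, h.range_eq_ker, h'.range_eq_ker]

theorem exists_retraction (h : IsShortExact f g) (hs : ∃ s : C →ₗ[R] G, g ∘ₗ s = .id) :
    ∃ r : G →ₗ[R] K, r ∘ₗ f = .id :=
  ((h.exact.split_tfae h.injective h.surjective).out 0 1).mp hs

theorem projective_left (h : IsShortExact f g) [Module.Projective R G]
    [Module.Projective R C] : Module.Projective R K := by
  obtain ⟨r, hr⟩ := h.exists_retraction
    (Module.projective_lifting_property g LinearMap.id h.surjective)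
  exact Module.Projective.of_split f r hr

theorem pushout {i : K →ₗ[R] G} {ρ : G →ₗ[R] C} (hiρ : IsShortExact i ρ) (φ : K →ₗ[R] M) :
    ∃ p : (M × G) ⧸ range (φ.prod (-i)) →ₗ[R] C,
      IsShortExact ((range (φ.prod (-i))).mkQ ∘ₗ inl R M G) p := by
  set D := range (φ.prod (-i))
  have hmem : ∀ x : M × G, D.mkQ x = 0 ↔ ∃ k, φ k = x.1 ∧ -i k = x.2 := fun x => by
    simp [D, Submodule.Quotient.mk_eq_zero, Prod.ext_iff]
  have hD : D ≤ ker (ρ ∘ₗ snd R M G) := by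
    rintro _ ⟨k, rfl⟩
    simp [hiρ.exact.apply_apply_eq_zero]
  refine ⟨D.liftQ (ρ ∘ₗ snd R M G) hD,
    (injective_iff_map_eq_zero _).mpr fun m hm => ?_, fun c => ?_, ?_⟩
  · obtain ⟨k, rfl, hk⟩ := (hmem _).mp hm
    rw [hiρ.injective ((neg_eq_zero.mp hk).trans (map_zero i).symm), map_zero]
  · obtain ⟨g, rfl⟩ := hiρ.surjective c
    exact ⟨D.mkQ (0, g), rfl⟩
  · ext y
    obtain ⟨⟨m, g⟩, rfl⟩ := D.mkQ_surjective y
    refine ⟨?_, fun hy => ?_⟩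
    · rintro ⟨m', hm'⟩
      rw [← hm']
      simp
    · obtain ⟨k, rfl⟩ : g ∈ range i := hiρ.range_eq_ker ▸ hy
      have hk : D.mkQ ((m + φ k, 0) - (m, i k)) = 0 := (hmem _).mpr ⟨k, by simp, by simp⟩
      rw [map_sub, sub_eq_zero] at hk
      exact ⟨m + φ k, hk⟩

theorem horseshoe {K₁ C₁ P Q : Type*} [AddCommGroup K₁] [Module R K₁] [AddCommGroup C₁]
    [Module R C₁] [AddCommGroup P] [Module R P] [AddCommGroup Q] [Module R Q]
    [Module.Projective R Q] {ι : K →ₗ[R] G} {p : G →ₗ[R] C} (h : IsShortExact ι p)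
    {iK : K₁ →ₗ[R] P} {πK : P →ₗ[R] K} (hK : IsShortExact iK πK)
    {iC : C₁ →ₗ[R] Q} {πC : Q →ₗ[R] C} (hC : IsShortExact iC πC) :
    ∃ (π : P × Q →ₗ[R] G) (ι₁ : K₁ →ₗ[R] ker π) (p₁ : ker π →ₗ[R] C₁),
      Surjective π ∧ IsShortExact ι₁ p₁ ∧ (ker π).subtype ∘ₗ ι₁ = inl R P Q ∘ₗ iK := by
  obtain ⟨σ, hσ⟩ := Module.projective_lifting_property p πC h.surjective
  have hσ' : ∀ y, p (σ y) = πC y := LinearMap.congr_fun hσ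
  set π : P × Q →ₗ[R] G := (ι ∘ₗ πK).coprod σ
  have hπ : ∀ x, π x = ι (πK x.1) + σ x.2 := fun _ => rfl
  let ι₁ : K₁ →ₗ[R] ker π := (inl R P Q ∘ₗ iK).codRestrict (ker π) fun k => by
    simp [hπ, hK.exact.apply_apply_eq_zero k]
  obtain ⟨p₁, hp₁⟩ := hC.exact.exists_lift_of_comp_eq_zero hC.injective
    (t := snd R P Q ∘ₗ (ker π).subtype) (by
    ext ⟨x, hx⟩
    have hx' : ι (πK x.1) + σ x.2 = 0 := hx
    show πC x.2 = 0
    rw [← hσ', ← neg_eq_of_add_eq_zero_right hx', map_neg, h.exact.apply_apply_eq_zero, neg_zero])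
  have hp₁' : ∀ x : ker π, iC (p₁ x) = (x : P × Q).2 := LinearMap.congr_fun hp₁
  refine ⟨π, ι₁, p₁, h.exact.surjective_coprod hK.surjective (hσ ▸ hC.surjective),
    ⟨fun a b hab => hK.injective (congrArg (fun x : ker π => (x : P × Q).1) hab), fun c => ?_, ?_⟩,
    rfl⟩
  · obtain ⟨k, hk⟩ : σ (iC c) ∈ range ι := by
      rw [h.range_eq_ker, mem_ker, hσ', hC.exact.apply_apply_eq_zero]
    obtain ⟨a, rfl⟩ := hK.surjective k
    refine ⟨⟨(-a, iC c), by rw [mem_ker, hπ, map_neg, map_neg, hk, neg_add_cancel]⟩, ?_⟩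
    exact hC.injective (hp₁' _)
  · ext x
    refine ⟨?_, fun hx => ?_⟩
    · rintro ⟨k, rfl⟩
      apply hC.injective
      rw [hp₁', map_zero]
      rfl
    · have h2 : (x : P × Q).2 = 0 := by rw [← hp₁', mem_ker.mp hx, map_zero]
      have h1 : πK (x : P × Q).1 = 0 := by
        apply h.injective
        have := x.2
        rw [mem_ker, hπ, h2, map_zero, add_zero] at this
        rw [this, map_zero]
      obtain ⟨k, hk⟩ : (x : P × Q).1 ∈ range iK := by rw [hK.range_eq_ker]; exact h1
      exact ⟨k, Subtype.ext (Prod.ext hk h2.symm)⟩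

end IsShortExact

end LinearAlgebra

variable {A : Type} [Ring A]

section Ext1

theorem ext1Zero_of_projective {X M : ModuleCat.{0} A} [Module.Projective A X] :
    Ext1Zero A X M :=
  fun _ _ g _ hg _ => Module.projective_lifting_property g LinearMap.id hg

theorem Ext1Zero.of_linearEquiv {X Z M : ModuleCat.{0} A} (h : Ext1Zero A X M)
    (e : ↥Z ≃ₗ[A] ↥X) : Ext1Zero A Z M := by
  intro E f g hf hg hfg
  obtain ⟨s, hs⟩ := h E f (e.toLinearMap ∘ₗ g) hf (e.surjective.comp hg)
    (by rw [hfg, LinearEquiv.ker_comp])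
  refine ⟨s ∘ₗ e.toLinearMap, ?_⟩
  ext z
  exact e.injective (by simpa using LinearMap.congr_fun hs (e z))

/-- The pushout of `0 → K → G → C → 0` along `φ : K → M` splits, and a retraction of it
restricts on `G` to an extension of `φ`. -/
theorem Ext1Zero.surjective_precomp {C M : ModuleCat.{0} A} (h : Ext1Zero A C M)
    {K G : Type} [AddCommGroup K] [Module A K] [AddCommGroup G] [Module A G]
    {i : K →ₗ[A] G} {ρ : G →ₗ[A] C} (hiρ : IsShortExact i ρ) :
    Surjective fun ψ : G →ₗ[A] M => ψ ∘ₗ i := by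
  intro φ
  obtain ⟨p, hp⟩ := hiρ.pushout φ
  obtain ⟨r, hr⟩ := hp.exists_retraction
    (h (ModuleCat.of A _) _ p hp.injective hp.surjective hp.range_eq_ker)
  refine ⟨r ∘ₗ (range (φ.prod (-i))).mkQ ∘ₗ inr A M G, ?_⟩
  ext k
  have hk : (range (φ.prod (-i))).mkQ (0, i k) = (range (φ.prod (-i))).mkQ (φ k, 0) :=
    (Submodule.Quotient.eq _).mpr ⟨-k, by simp⟩
  simpa [hk] using LinearMap.congr_fun hr (φ k)

theorem ext1Zero_of_surjective_precomp {C M : ModuleCat.{0} A} {K P : Type} [AddCommGroup K]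
    [Module A K] [AddCommGroup P] [Module A P] [Module.Projective A P]
    {i : K →ₗ[A] P} {ρ : P →ₗ[A] C} (hiρ : Function.Exact i ρ) (hρ : Surjective ρ)
    (hext : Surjective fun ψ : P →ₗ[A] M => ψ ∘ₗ i) : Ext1Zero A C M := by
  intro E f g hf hg hfg
  obtain ⟨θ, hθ⟩ := Module.projective_lifting_property g ρ hg
  exact hiρ.exists_lift_of_surjective_precomp hρ (LinearMap.exact_iff.mpr hfg.symm) hf
    (μ := LinearMap.id) hθ hext

theorem ext1Zero_iff_surjective_precomp {C M : ModuleCat.{0} A} {K P : Type} [AddCommGroup K]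
    [Module A K] [AddCommGroup P] [Module A P] [Module.Projective A P]
    {i : K →ₗ[A] P} {ρ : P →ₗ[A] C} (hiρ : IsShortExact i ρ) :
    Ext1Zero A C M ↔ Surjective fun ψ : P →ₗ[A] M => ψ ∘ₗ i :=
  ⟨fun h => h.surjective_precomp hiρ, ext1Zero_of_surjective_precomp hiρ.exact hiρ.surjective⟩

theorem Ext1Zero.exists_lift {S W : ModuleCat.{0} A} (h : Ext1Zero A S W) {E V : Type}
    [AddCommGroup E] [Module A E] [AddCommGroup V] [Module A V] {j : W →ₗ[A] E}
    {π : E →ₗ[A] V} (hjπ : IsShortExact j π) (μ : S →ₗ[A] V) :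
    ∃ σ : S →ₗ[A] E, π ∘ₗ σ = μ := by
  have hS := IsShortExact.subtype_ker (Finsupp.linearCombination_id_surjective A S)
  obtain ⟨θ, hθ⟩ := Module.projective_lifting_property π
    (μ ∘ₗ Finsupp.linearCombination A _root_.id) hjπ.surjective
  exact hS.exact.exists_lift_of_surjective_precomp hS.surjective hjπ.exact hjπ.injective hθ
    (h.surjective_precomp hS)

theorem ext1Zero_prod_iff {X Y M : ModuleCat.{0} A} :
    Ext1Zero A (ModuleCat.of A (X × Y)) M ↔ Ext1Zero A X M ∧ Ext1Zero A Y M := by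
  have hX := IsShortExact.subtype_ker (Finsupp.linearCombination_id_surjective A X)
  have hY := IsShortExact.subtype_ker (Finsupp.linearCombination_id_surjective A Y)
  rw [ext1Zero_iff_surjective_precomp (hX.prodMap hY), ext1Zero_iff_surjective_precomp hX,
    ext1Zero_iff_surjective_precomp hY]
  refine ⟨fun h => ⟨fun φ => ?_, fun φ => ?_⟩, fun ⟨h₁, h₂⟩ φ => ?_⟩
  · obtain ⟨ψ, hψ⟩ := h (φ ∘ₗ fst A _ _)
    exact ⟨ψ ∘ₗ inl A _ _, by ext x; simpa using LinearMap.congr_fun hψ (x, 0)⟩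
  · obtain ⟨ψ, hψ⟩ := h (φ ∘ₗ snd A _ _)
    exact ⟨ψ ∘ₗ inr A _ _, by ext x; simpa using LinearMap.congr_fun hψ (0, x)⟩
  · obtain ⟨ψ₁, hψ₁ : ψ₁ ∘ₗ _ = _⟩ := h₁ (φ ∘ₗ inl A _ _)
    obtain ⟨ψ₂, hψ₂ : ψ₂ ∘ₗ _ = _⟩ := h₂ (φ ∘ₗ inr A _ _)
    refine ⟨ψ₁.coprod ψ₂, ?_⟩
    ext x <;> simp [← hψ₁, ← hψ₂]

theorem ext1Zero_of_inAdd {Z T M : ModuleCat.{0} A} (h : Ext1Zero A Z T) (hM : InAdd A T M) :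
    Ext1Zero A Z M := by
  obtain ⟨r, Y, ⟨e⟩⟩ := hM
  have hZ := IsShortExact.subtype_ker (Finsupp.linearCombination_id_surjective A Z)
  rw [ext1Zero_iff_surjective_precomp hZ] at h ⊢
  intro φ
  choose ψ hψ using fun l => h (proj l ∘ₗ e.toLinearMap ∘ₗ inl A M Y ∘ₗ φ)
  have hpi : LinearMap.pi ψ ∘ₗ (ker _).subtype = e.toLinearMap ∘ₗ inl A M Y ∘ₗ φ := by
    ext x l
    exact LinearMap.congr_fun (hψ l) x
  refine ⟨fst A M Y ∘ₗ e.symm.toLinearMap ∘ₗ LinearMap.pi ψ, ?_⟩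
  ext x
  simpa using congr(fst A M Y (e.symm $(LinearMap.congr_fun hpi x)))

end Ext1

section Syzygy

theorem isSyzygyOf_of_isShortExact {Z X : ModuleCat.{0} A} {P : Type} [AddCommGroup P]
    [Module A P] [Module.Projective A P] {i : Z →ₗ[A] P} {p : P →ₗ[A] X}
    (h : IsShortExact i p) : IsSyzygyOf A Z X :=
  ⟨ModuleCat.of A P, p, i, ‹_›, h.surjective, h.injective, h.range_eq_ker⟩

theorem isSyzygyOf_ker {X : ModuleCat.{0} A} {P : Type} [AddCommGroup P] [Module A P]
    [Module.Projective A P] {ρ : P →ₗ[A] X} (hρ : Surjective ρ) :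
    IsSyzygyOf A (ModuleCat.of A (ker ρ)) X :=
  isSyzygyOf_of_isShortExact (.subtype_ker hρ)

theorem exists_isSyzygyOf (X : ModuleCat.{0} A) : ∃ Z, IsSyzygyOf A Z X :=
  ⟨_, isSyzygyOf_ker (Finsupp.linearCombination_id_surjective A X)⟩

theorem exists_nthSyzygy (m : ℕ) (X : ModuleCat.{0} A) : ∃ Z, NthSyzygy A m Z X := by
  induction m generalizing X with
  | zero => exact ⟨X, ⟨LinearEquiv.refl A X⟩⟩
  | succ m ih =>
    obtain ⟨W, hW⟩ := exists_isSyzygyOf X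
    obtain ⟨Z, hZ⟩ := ih W
    exact ⟨Z, W, hW, hZ⟩

theorem isSyzygyOf_prod {Z₁ X₁ Z₂ X₂ : ModuleCat.{0} A} (h₁ : IsSyzygyOf A Z₁ X₁)
    (h₂ : IsSyzygyOf A Z₂ X₂) :
    IsSyzygyOf A (ModuleCat.of A (Z₁ × Z₂)) (ModuleCat.of A (X₁ × X₂)) := by
  obtain ⟨P₁, p₁, i₁, hP₁, hp₁, hi₁, hr₁⟩ := h₁
  obtain ⟨P₂, p₂, i₂, hP₂, hp₂, hi₂, hr₂⟩ := h₂
  exact isSyzygyOf_of_isShortExact (IsShortExact.prodMap ⟨hi₁, hp₁, hr₁⟩ ⟨hi₂, hp₂, hr₂⟩)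

theorem nthSyzygy_prod {m : ℕ} {Z₁ X₁ Z₂ X₂ : ModuleCat.{0} A} (h₁ : NthSyzygy A m Z₁ X₁)
    (h₂ : NthSyzygy A m Z₂ X₂) :
    NthSyzygy A m (ModuleCat.of A (Z₁ × Z₂)) (ModuleCat.of A (X₁ × X₂)) := by
  induction m generalizing X₁ X₂ with
  | zero =>
    obtain ⟨e₁⟩ := h₁
    obtain ⟨e₂⟩ := h₂
    exact ⟨e₁.prodCongr e₂⟩
  | succ m ih =>
    obtain ⟨W₁, hW₁, hZ₁⟩ := h₁
    obtain ⟨W₂, hW₂, hZ₂⟩ := h₂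
    exact ⟨_, isSyzygyOf_prod hW₁ hW₂, ih hZ₁ hZ₂⟩

theorem nthSyzygy_of_linearEquiv {m : ℕ} {Z X X' : ModuleCat.{0} A} (h : NthSyzygy A m Z X')
    (e : ↥X' ≃ₗ[A] ↥X) : NthSyzygy A m Z X := by
  cases m with
  | zero =>
    obtain ⟨e₀⟩ := h
    exact ⟨e₀.trans e⟩
  | succ m =>
    obtain ⟨W, ⟨P, p, i, hP, hp, hi, hr⟩, hZ⟩ := h
    exact ⟨W, ⟨P, e.toLinearMap ∘ₗ p, i, hP, e.surjective.comp hp, hi,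
      by rw [LinearEquiv.ker_comp, hr]⟩, hZ⟩

theorem projective_of_nthSyzygy {m : ℕ} {Z X : ModuleCat.{0} A} (h : NthSyzygy A m Z X)
    [Module.Projective A X] : Module.Projective A Z := by
  induction m generalizing X with
  | zero =>
    obtain ⟨e⟩ := h
    exact .of_equiv e.symm
  | succ m ih =>
    obtain ⟨W, ⟨P, p, i, hP, hp, hi, hr⟩, hZ⟩ := h
    have := (IsShortExact.mk hi hp hr).projective_left
    exact ih hZ

end Syzygy

section DimensionShifting

/-- `Ext¹(Z, X') ↪ Ext²(Z, X) = Ext¹(Z', X)` because `Ext¹(Z, T') = 0`. -/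
theorem ext1Zero_cosyzygy {Z Z' X T' X' : ModuleCat.{0} A} (hZ : IsSyzygyOf A Z' Z)
    {f : ↥X →ₗ[A] ↥T'} {g : ↥T' →ₗ[A] ↥X'} (hfg : IsShortExact f g)
    (hX : Ext1Zero A Z' X) (hT' : Ext1Zero A Z T') : Ext1Zero A Z X' := by
  obtain ⟨P, ρ, i, hP, hρ, hi, hr⟩ := hZ
  have hiρ : IsShortExact i ρ := ⟨hi, hρ, hr⟩
  refine ext1Zero_of_surjective_precomp hiρ.exact hρ fun φ => ?_
  obtain ⟨φ', hφ'⟩ := hX.exists_lift hfg φ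
  obtain ⟨ψ, hψ : ψ ∘ₗ i = φ'⟩ := hT'.surjective_precomp hiρ φ'
  exact ⟨g ∘ₗ ψ, by dsimp only; rw [LinearMap.comp_assoc, hψ, hφ']⟩

/-- Exactness of `Ext¹(V, M) → Ext¹(W, M) → Ext²(G, M)`. -/
theorem ext1Zero_ker {W V G G₁ M : ModuleCat.{0} A} {ι : ↥W →ₗ[A] ↥V} {q : ↥V →ₗ[A] ↥G}
    (h : IsShortExact ι q) (hV : Ext1Zero A V M) (hG₁ : IsSyzygyOf A G₁ G)
    (hG : Ext1Zero A G₁ M) : Ext1Zero A W M := by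
  obtain ⟨Q, πG, iG, hQ, hπG, hiG, hrG⟩ := hG₁
  have hW := IsShortExact.subtype_ker (Finsupp.linearCombination_id_surjective A W)
  obtain ⟨π, ι₁, _, hπ, h₁, hcomm⟩ := h.horseshoe hW ⟨hiG, hπG, hrG⟩
  refine (ext1Zero_iff_surjective_precomp hW).mpr fun φ => ?_
  obtain ⟨ψ₁, hψ₁ : ψ₁ ∘ₗ ι₁ = φ⟩ := hG.surjective_precomp h₁ φ
  obtain ⟨ψ₂, hψ₂ : ψ₂ ∘ₗ (ker π).subtype = ψ₁⟩ := hV.surjective_precomp (.subtype_ker hπ) ψ₁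
  refine ⟨ψ₂ ∘ₗ inl A _ _, ?_⟩
  dsimp only
  rw [LinearMap.comp_assoc, ← hcomm, ← LinearMap.comp_assoc, hψ₂, hψ₁]

/-- Exactness of `Hom(G, M) → Hom(K, M) → Ext¹(C, M) → Ext¹(G, M)`. -/
theorem ext1Zero_coker {K G C M : ModuleCat.{0} A} {ι : ↥K →ₗ[A] ↥G} {p : ↥G →ₗ[A] ↥C}
    (h : Function.Exact ι p) (hp : Surjective p) (hG : Ext1Zero A G M)
    (hext : Surjective fun ψ : ↥G →ₗ[A] ↥M => ψ ∘ₗ ι) : Ext1Zero A C M := by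
  intro E f g hf hg hfg
  obtain ⟨θ, hθ⟩ := hG.exists_lift ⟨hf, hg, hfg⟩ p
  exact h.exists_lift_of_surjective_precomp hp (LinearMap.exact_iff.mpr hfg.symm) hf
    (μ := LinearMap.id) hθ hext

end DimensionShifting

section Perp

theorem MemPerp.ext1Zero {T X : ModuleCat.{0} A} (h : MemPerp A T X) : Ext1Zero A X T :=
  h 0 X ⟨LinearEquiv.refl A X⟩

theorem MemPerp.of_isSyzygyOf {T X Z : ModuleCat.{0} A} (h : MemPerp A T X)
    (hZ : IsSyzygyOf A Z X) : MemPerp A T Z :=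
  fun m Z' hZ' => h (m + 1) Z' ⟨Z, hZ, hZ'⟩

theorem MemPerp.of_linearEquiv {T X X' : ModuleCat.{0} A} (h : MemPerp A T X)
    (e : ↥X' ≃ₗ[A] ↥X) : MemPerp A T X' :=
  fun m Z hZ => h m Z (nthSyzygy_of_linearEquiv hZ e)

theorem memPerp_of_projective {T X : ModuleCat.{0} A} [Module.Projective A X] :
    MemPerp A T X :=
  fun _ _ hZ => have := projective_of_nthSyzygy hZ; ext1Zero_of_projective

theorem memPerp_ker {T W V G : ModuleCat.{0} A} {ι : ↥W →ₗ[A] ↥V} {q : ↥V →ₗ[A] ↥G}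
    (h : IsShortExact ι q) (hV : MemPerp A T V) (hG : MemPerp A T G) : MemPerp A T W := by
  intro m
  induction m generalizing W V G with
  | zero =>
    rintro Z ⟨e⟩
    obtain ⟨G₁, hG₁⟩ := exists_isSyzygyOf G
    exact (ext1Zero_ker h hV.ext1Zero hG₁ (hG.of_isSyzygyOf hG₁).ext1Zero).of_linearEquiv e
  | succ m ih =>
    rintro Z ⟨W₁, ⟨P, πW, iW, hP, hπW, hiW, hrW⟩, hZ⟩
    have hG₁ := IsShortExact.subtype_ker (Finsupp.linearCombination_id_surjective A G)
    obtain ⟨π, ι₁, _, hπ, h₁, -⟩ := h.horseshoe ⟨hiW, hπW, hrW⟩ hG₁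
    exact ih (V := ModuleCat.of A (ker π)) (G := ModuleCat.of A (ker _)) h₁
      (hV.of_isSyzygyOf (isSyzygyOf_ker hπ)) (hG.of_isSyzygyOf (isSyzygyOf_of_isShortExact hG₁))
      Z hZ

theorem memPerp_coker {T K G C : ModuleCat.{0} A} {ι : ↥K →ₗ[A] ↥G} {p : ↥G →ₗ[A] ↥C}
    (h : IsShortExact ι p) (hK : MemPerp A T K) (hG : MemPerp A T G)
    (hext : Surjective fun ψ : ↥G →ₗ[A] ↥T => ψ ∘ₗ ι) : MemPerp A T C := by
  intro m
  induction m generalizing K G C with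
  | zero =>
    rintro Z ⟨e⟩
    exact (ext1Zero_coker h.exact h.surjective hG.ext1Zero hext).of_linearEquiv e
  | succ m ih =>
    rintro Z ⟨C₁, ⟨Q, πC, iC, hQ, hπC, hiC, hrC⟩, hZ⟩
    have hK₁ := IsShortExact.subtype_ker (Finsupp.linearCombination_id_surjective A K)
    obtain ⟨π, ι₁, _, hπ, h₁, hcomm⟩ := h.horseshoe hK₁ ⟨hiC, hπC, hrC⟩
    refine ih (K := ModuleCat.of A (ker _)) (G := ModuleCat.of A (ker π)) h₁
      (hK.of_isSyzygyOf (isSyzygyOf_of_isShortExact hK₁)) (hG.of_isSyzygyOf (isSyzygyOf_ker hπ))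
      (fun φ => ?_) Z hZ
    obtain ⟨ψ, hψ : ψ ∘ₗ _ = φ⟩ := hK.ext1Zero.surjective_precomp hK₁ φ
    refine ⟨ψ ∘ₗ fst A _ _ ∘ₗ (ker π).subtype, ?_⟩
    dsimp only
    rw [LinearMap.comp_assoc, LinearMap.comp_assoc, hcomm,
      ← LinearMap.comp_assoc _ (inl A _ _) (fst A _ _), fst_comp_inl, LinearMap.id_comp, hψ]

theorem memPerp_prod {T X Y : ModuleCat.{0} A} (hX : MemPerp A T X) (hY : MemPerp A T Y) :
    MemPerp A T (ModuleCat.of A (X × Y)) := by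
  rintro (_ | m) Z hZ
  · obtain ⟨e⟩ := hZ
    exact (ext1Zero_prod_iff.mpr ⟨hX.ext1Zero, hY.ext1Zero⟩).of_linearEquiv e
  · obtain ⟨Z₁, ⟨P, ρ, i, hP, hρ, hi, hr⟩, hZ⟩ := hZ
    -- `Z₁` is the kernel of `ker (fst ∘ ρ) → Y`, and `ker (fst ∘ ρ)` is a syzygy of `X`.
    have hρX : Surjective (fst A X Y ∘ₗ ρ) := Prod.fst_surjective.comp hρ
    have hρi : ∀ z, ρ (i z) = 0 := (IsShortExact.mk hi hρ hr).exact.apply_apply_eq_zero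
    have hmem : ∀ z, i z ∈ ker (fst A X Y ∘ₗ ρ) := fun z => by simp [hρi]
    have hs : IsShortExact (i.codRestrict _ hmem) (snd A X Y ∘ₗ ρ ∘ₗ (ker _).subtype) := by
      refine ⟨fun a b hab => hi (congrArg Subtype.val hab), fun y => ?_, ?_⟩
      · obtain ⟨x, hx⟩ := hρ (0, y)
        exact ⟨⟨x, by simp [hx]⟩, by simp [hx]⟩
      · ext ⟨x, hx⟩
        refine ⟨?_, fun hq => ?_⟩
        · rintro ⟨z, hz⟩
          simp [← hz, hρi]
        · obtain ⟨z, hz⟩ : x ∈ range i := by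
            rw [hr, mem_ker]
            exact Prod.ext (mem_ker.mp hx) (mem_ker.mp hq)
          exact ⟨z, Subtype.ext hz⟩
    exact memPerp_ker (V := ModuleCat.of A (ker _)) hs (hX.of_isSyzygyOf (isSyzygyOf_ker hρX))
      hY m Z hZ

theorem MemPerp.of_prod_left {T X Y : ModuleCat.{0} A}
    (h : MemPerp A T (ModuleCat.of A (X × Y))) : MemPerp A T X := by
  intro m Z hZ
  obtain ⟨Z', hZ'⟩ := exists_nthSyzygy m Y
  exact (ext1Zero_prod_iff.mp (h m _ (nthSyzygy_prod hZ hZ'))).1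

theorem memPerp_pi {T : ModuleCat.{0} A} (hT : MemPerp A T T) (r : ℕ) :
    MemPerp A T (ModuleCat.of A (Fin r → T)) := by
  induction r with
  | zero => exact memPerp_of_projective
  | succ r ih => exact (memPerp_prod hT ih).of_linearEquiv (Fin.consLinearEquiv A fun _ => T).symm

theorem memPerp_of_inAdd {T X : ModuleCat.{0} A} (hT : MemPerp A T T) (hX : InAdd A T X) :
    MemPerp A T X := by
  obtain ⟨r, Y, ⟨e⟩⟩ := hX
  exact MemPerp.of_prod_left (Y := Y) ((memPerp_pi hT r).of_linearEquiv e)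

end Perp

theorem inAdd_self (T : ModuleCat.{0} A) : InAdd A T T :=
  ⟨1, ModuleCat.of A PUnit, ⟨LinearEquiv.prodUnique.trans (LinearEquiv.funUnique (Fin 1) A T).symm⟩⟩

theorem nth_cosyzygy_mem_add_general
    (k : Type) [Field k]
    (A : Type) [Ring A] [Algebra k A]
    (n : ℕ) (hgl : GlobalDimLE A n)
    (T : ModuleCat.{0} A) (hT : IsCotilting A k T)
    (haux : ∀ X : ModuleCat.{0} A, Module.Finite A ↥X → MemPerp A T X →
      (InAdd A T X ↔ ∀ Y : ModuleCat.{0} A, Module.Finite A ↥Y → MemPerp A T Y →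
        Ext1Zero A Y X))
    (XS : Fin (n+1) → ModuleCat.{0} A) (TS : Fin n → ModuleCat.{0} A)
    (hfg : ∀ i, Module.Finite A ↥(XS i))
    (hX : MemPerp A T (XS 0))
    (f : ∀ i : Fin n, ↥(XS i.castSucc) →ₗ[A] ↥(TS i))
    (g : ∀ i : Fin n, ↥(TS i) →ₗ[A] ↥(XS i.succ))
    (hTS : ∀ i, InAdd A T (TS i))
    (hfinj : ∀ i, Function.Injective (f i))
    (happrox : ∀ (i : Fin n) (T'' : ModuleCat.{0} A), InAdd A T T'' →
      ∀ φ : ↥(XS i.castSucc) →ₗ[A] ↥T'', ∃ ψ : ↥(TS i) →ₗ[A] ↥T'', ψ.comp (f i) = φ)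
    (hgsurj : ∀ i, Function.Surjective (g i))
    (hexact : ∀ i, LinearMap.range (f i) = LinearMap.ker (g i)) :
    InAdd A T (XS (Fin.last n)) := by
  have hTT : MemPerp A T T := hT.2.2.1
  have hses : ∀ i, IsShortExact (f i) (g i) := fun i => ⟨hfinj i, hgsurj i, hexact i⟩
  have hperp : ∀ i, MemPerp A T (XS i) := Fin.induction hX fun i ih =>
    memPerp_coker (hses i) ih (memPerp_of_inAdd hTT (hTS i)) (happrox i T (inAdd_self T))
  have hext : ∀ (i : Fin (n + 1)) (Y : ModuleCat.{0} A), ProjDimLE A i Y → MemPerp A T Y →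
      Ext1Zero A Y (XS i) := by
    intro i
    induction i using Fin.induction with
    | zero =>
      intro Y hY _
      have : Module.Projective A Y := hY
      exact ext1Zero_of_projective
    | succ i ih =>
      rintro Y ⟨P, ρ, hP, hρ, hY'⟩ hY
      exact ext1Zero_cosyzygy (isSyzygyOf_ker hρ) (hses i)
        (ih _ hY' (hY.of_isSyzygyOf (isSyzygyOf_ker hρ))) (ext1Zero_of_inAdd hY.ext1Zero (hTS i))
  exact (haux _ (hfg _) (hperp _)).mpr fun Y _ hY => hext (Fin.last n) Y (hgl Y) hY

/-- Proposition 6.6 of Kimura, "Tilting theory of preprojective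
algebras and c-sortable elements".

Let `A` be a finite dimensional algebra over an algebraically closed field of global
dimension at most `n` and `T` a cotilting `A`-module.  Then for every `X ∈ ⊥T`, the
`n`-th cosyzygy `Ω_T^{−n} X` with respect to `T` lies in `add T`: if
`0 → X → T_0 → T_1 → ⋯ → T_{n−1} → C → 0` is an exact sequence obtained by repeatedly
taking injective left `(add T)`-approximations (each `T_i ∈ add T`, each successive
cokernel being the cokernel of an injective left `(add T)`-approximation), then
`C ∈ add T`.  (Here we may use the characterization, valid for cotilting modules,
that a module `X ∈ ⊥T` lies in `add T` if and only if `Ext¹_A(Y, X) = 0` for all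
`Y ∈ ⊥T`; it is included as the hypothesis `haux`.) -/
theorem nth_cosyzygy_mem_add
    (k : Type) [Field k] [IsAlgClosed k]
    (A : Type) [Ring A] [Algebra k A] [FiniteDimensional k A]
    (n : ℕ) (hgl : GlobalDimLE A n)
    (T : ModuleCat.{0} A) (hT : IsCotilting A k T)
    (haux : ∀ X : ModuleCat.{0} A, Module.Finite A ↥X → MemPerp A T X →
      (InAdd A T X ↔ ∀ Y : ModuleCat.{0} A, Module.Finite A ↥Y → MemPerp A T Y →
        Ext1Zero A Y X))
    (XS : Fin (n+1) → ModuleCat.{0} A) (TS : Fin n → ModuleCat.{0} A)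
    (hfg : ∀ i, Module.Finite A ↥(XS i))
    (hX : MemPerp A T (XS 0))
    (f : ∀ i : Fin n, ↥(XS i.castSucc) →ₗ[A] ↥(TS i))
    (g : ∀ i : Fin n, ↥(TS i) →ₗ[A] ↥(XS i.succ))
    (hTS : ∀ i, InAdd A T (TS i))
    (hfinj : ∀ i, Function.Injective (f i))
    (happrox : ∀ (i : Fin n) (T'' : ModuleCat.{0} A), InAdd A T T'' →
      ∀ φ : ↥(XS i.castSucc) →ₗ[A] ↥T'', ∃ ψ : ↥(TS i) →ₗ[A] ↥T'', ψ.comp (f i) = φ)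
    (hgsurj : ∀ i, Function.Surjective (g i))
    (hexact : ∀ i, LinearMap.range (f i) = LinearMap.ker (g i)) :
    InAdd A T (XS (Fin.last n)) :=
  nth_cosyzygy_mem_add_general k A n hgl T hT haux XS TS hfg hX f g hTS hfinj happrox hgsurj hexact

end Cotilt
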